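/- arXiv:1705.09280 — 2 statements merged into one kernel-verified Lean document; each statement's English description precedes it below -/
import Mathlib

section
/- Suppose the symmetric matrices A₁,…,A_m pairwise commute. Let s : ℝ → ℝ^m be differentiable with s(0) = 0, and define X(t) = exp(A*(s(t))) · X₀ · exp(A*(s(t))). Then X(0) = X₀ and X'(t) = A*(s'(t)) X(t) + X(t) A*(s'(t)). In particular, if s'(t) = -(A(X(t)) - y), then X solves the factorized gradient flow ODE X'(t) = -A*(r(t)) X(t) - X(t) A*(r(t)) with r(t) = A(X(t)) - y. -/
open Matrix

attribute [local instance] Matrix.normedAddCommGroup Matrix.normedSpace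

/-- `𝒜(X) i = trace ((A i)ᵀ X)`. -/
def opA {n m : ℕ} (A : Fin m → Matrix (Fin n) (Fin n) ℝ)
    (X : Matrix (Fin n) (Fin n) ℝ) : Fin m → ℝ :=
  fun i => ((A i)ᵀ * X).trace

/-- `𝒜*(s) = ∑ i, s i • A i`. -/
def opAstar {n m : ℕ} (A : Fin m → Matrix (Fin n) (Fin n) ℝ)
    (s : Fin m → ℝ) : Matrix (Fin n) (Fin n) ℝ :=
  ∑ i, s i • A i

lemma opAstar_zero {n m : ℕ} (A : Fin m → Matrix (Fin n) (Fin n) ℝ) :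
    opAstar A 0 = 0 := by simp [opAstar]

lemma opAstar_neg {n m : ℕ} (A : Fin m → Matrix (Fin n) (Fin n) ℝ) (r : Fin m → ℝ) :
    opAstar A (-r) = -(opAstar A r) := by
  simp [opAstar, neg_smul, Finset.sum_neg_distrib]

lemma opAstar_commute {n m : ℕ} (A : Fin m → Matrix (Fin n) (Fin n) ℝ)
    (hcomm : ∀ i j, A i * A j = A j * A i) (u v : Fin m → ℝ) :
    Commute (opAstar A u) (opAstar A v) := by
  refine Commute.sum_left _ _ _ fun i _ => ?_
  refine Commute.sum_right _ _ _ fun j _ => ?_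
  have hc : Commute (A i) (A j) := hcomm i j
  exact (hc.smul_left _).smul_right _

section LinftyWorld

attribute [-instance] Matrix.normedAddCommGroup Matrix.normedSpace
attribute [local instance] Matrix.linftyOpNormedRing Matrix.linftyOpNormedAlgebra
attribute [-instance] instTopologicalSpaceMatrix Matrix.instUniformSpace Matrix.addCommGroup Matrix.module

open NormedSpace

lemma keyDeriv {n m : ℕ} (A : Fin m → Matrix (Fin n) (Fin n) ℝ)
    (hcomm : ∀ i j, A i * A j = A j * A i)
    (X₀ : Matrix (Fin n) (Fin n) ℝ)
    (s s' : ℝ → Fin m → ℝ) (hs : ∀ t, HasDerivAt s (s' t) t)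
    (X : ℝ → Matrix (Fin n) (Fin n) ℝ)
    (hX : ∀ t, X t = exp (opAstar A (s t)) * X₀ * exp (opAstar A (s t))) (t : ℝ) :
    @HasDerivAt ℝ _ _ _ _
      (Matrix.normedAddCommGroup (n := Fin n) (m := Fin n) (α := ℝ)).toUniformSpace.toTopologicalSpace _ X
      (opAstar A (s' t) * X t + X t * opAstar A (s' t)) t := by
  rw [show X = fun u => exp (opAstar A (s u)) * X₀ * exp (opAstar A (s u)) from
    funext fun u => hX u]
  refine (@hasDerivAt_iff_tendsto_slope ℝ _ _ Matrix.normedAddCommGroup Matrix.normedSpace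
    _ _ t).mpr ?_
  refine hasDerivAt_iff_tendsto_slope.mp ?_
  haveI : CompleteSpace (Matrix (Fin n) (Fin n) ℝ) := FiniteDimensional.complete ℝ _
  set B : ℝ → Matrix (Fin n) (Fin n) ℝ := fun u => opAstar A (s u) with hBdef
  set P : Matrix (Fin n) (Fin n) ℝ := opAstar A (s' t) with hPdef
  have hB : HasDerivAt B P t := by
    simp only [hBdef, hPdef, opAstar]
    refine HasDerivAt.fun_sum fun i _ => ?_
    have hi : HasDerivAt (fun u => s u i) (s' t i) t :=
      (ContinuousLinearMap.proj i (R := ℝ) (φ := fun _ : Fin m => ℝ)).hasFDerivAt.comp_hasDerivAt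
        t (hs t)
    exact hi.smul_const (A i)
  -- E u = exp (B u)
  have hEeq : ∀ u, exp (B u) = exp (B u - B t) * exp (B t) := by
    intro u
    rw [← NormedSpace.exp_add_of_commute (x := B u - B t) (y := B t) ((opAstar_commute A hcomm _ _).sub_left (Commute.refl _))]
    congr 1
    abel
  have hg : HasDerivAt (fun u => B u - B t) P t := hB.sub_const _
  have hexp0 : HasFDerivAt (exp)
      (1 : Matrix (Fin n) (Fin n) ℝ →L[ℝ] Matrix (Fin n) (Fin n) ℝ)
      ((fun u => B u - B t) t) := by
    have h0 : (fun u => B u - B t) t = 0 := sub_self _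
    rw [h0]
    exact hasFDerivAt_exp_zero
  have hexp : HasDerivAt (fun u => exp (B u - B t)) P t := by
    simpa [Function.comp_def] using hexp0.comp_hasDerivAt t hg
  have hE : HasDerivAt (fun u => exp (B u)) (P * exp (B t)) t := by
    have h1 : HasDerivAt (fun u => exp (B u - B t) * exp (B t)) (P * exp (B t)) t :=
      hexp.mul_const _
    exact h1.congr_of_eventuallyEq (Filter.Eventually.of_forall hEeq)
  have hXd : HasDerivAt (fun u => exp (B u) * X₀ * exp (B u))
      ((P * exp (B t) * X₀) * exp (B t) + (exp (B t) * X₀) * (P * exp (B t))) t :=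
    (hE.mul_const X₀).mul hE
  convert hXd using 1
  · rfl
  have hc : P * exp (B t) = exp (B t) * P :=
    ((opAstar_commute A hcomm _ _).exp_right).eq
  simp only [hBdef, mul_assoc, hc]
  rw [← mul_assoc, hc, mul_assoc]

end LinftyWorld

theorem stmt2 {n m : ℕ}
    (A : Fin m → Matrix (Fin n) (Fin n) ℝ) (hA : ∀ i, (A i)ᵀ = A i)
    (hcomm : ∀ i j, A i * A j = A j * A i)
    (y : Fin m → ℝ) (X₀ : Matrix (Fin n) (Fin n) ℝ)
    (s s' : ℝ → Fin m → ℝ)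
    (hs : ∀ t, HasDerivAt s (s' t) t) (hs0 : s 0 = 0)
    (X : ℝ → Matrix (Fin n) (Fin n) ℝ)
    (hX : ∀ t, X t = NormedSpace.exp (opAstar A (s t)) * X₀ *
      NormedSpace.exp (opAstar A (s t))) :
    X 0 = X₀ ∧
      (∀ t, HasDerivAt X (opAstar A (s' t) * X t + X t * opAstar A (s' t)) t) ∧
      ((∀ t, s' t = -(opA A (X t) - y)) →
        ∀ t, HasDerivAt X (-(opAstar A (opA A (X t) - y)) * X t
          - X t * opAstar A (opA A (X t) - y)) t) := by
  have hderiv : ∀ t, HasDerivAt X (opAstar A (s' t) * X t + X t * opAstar A (s' t)) t :=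
    fun t => keyDeriv A hcomm X₀ s s' hs X hX t
  refine ⟨?_, hderiv, ?_⟩
  · rw [hX 0, hs0, opAstar_zero, NormedSpace.exp_zero, one_mul, mul_one]
  · intro hr t
    have h2 := hderiv t
    rw [hr t, opAstar_neg] at h2
    simpa [mul_neg, neg_mul, sub_eq_add_neg] using h2
end

section
/- Let X : ℝ → Matrix n n ℝ solve Ẋ(t) = -M(t) X(t) - X(t) M(t) where M(t) is symmetric for each t and t ↦ M(t) is continuous. If X(0) is symmetric positive semidefinite, then X(t) is symmetric positive semidefinite for all t ≥ 0. -/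
open Matrix Set Filter Topology

attribute [local instance] Matrix.normedAddCommGroup Matrix.normedSpace




lemma normMulLe {n : ℕ} (A B : Matrix (Fin n) (Fin n) ℝ) :
    ‖A * B‖ ≤ n * ‖A‖ * ‖B‖ := by
  rcases Nat.eq_zero_or_pos n with h | h
  · subst h
    have : A * B = 0 := by ext i j; exact absurd i.2 (by omega)
    rw [this]
    simp
  · refine (Matrix.norm_le_iff (by positivity)).2 fun i j => ?_
    calc ‖(A * B) i j‖ = |∑ k, A i k * B k j| := by rfl
      _ ≤ ∑ k, |A i k * B k j| := Finset.abs_sum_le_sum_abs _ _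
      _ ≤ ∑ _k : Fin n, ‖A‖ * ‖B‖ := by
          refine Finset.sum_le_sum fun k _ => ?_
          rw [abs_mul]
          exact mul_le_mul (A.norm_entry_le_entrywise_sup_norm)
            (B.norm_entry_le_entrywise_sup_norm) (abs_nonneg _) (norm_nonneg _)
      _ = n * ‖A‖ * ‖B‖ := by simp [mul_assoc]

noncomputable def qfL {n : ℕ} (v : Fin n → ℝ) :
    Matrix (Fin n) (Fin n) ℝ →L[ℝ] ℝ :=
  LinearMap.toContinuousLinearMap
    { toFun := fun A => v ⬝ᵥ A *ᵥ v
      map_add' := fun A B => by simp [Matrix.add_mulVec, dotProduct_add]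
      map_smul' := fun c A => by simp [Matrix.smul_mulVec, dotProduct_smul] }

@[simp] lemma qfL_apply {n : ℕ} (v : Fin n → ℝ) (A : Matrix (Fin n) (Fin n) ℝ) :
    qfL v A = v ⬝ᵥ A *ᵥ v := rfl

noncomputable def trL {n : ℕ} :
    Matrix (Fin n) (Fin n) ℝ →L[ℝ] Matrix (Fin n) (Fin n) ℝ :=
  LinearMap.toContinuousLinearMap
    { toFun := fun A => Aᵀ
      map_add' := fun A B => by simp [Matrix.transpose_add]
      map_smul' := fun c A => by simp }

@[simp] lemma trL_apply {n : ℕ} (A : Matrix (Fin n) (Fin n) ℝ) : trL A = Aᵀ := rfl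




lemma dotSelfNonneg {n : ℕ} (v : Fin n → ℝ) : 0 ≤ v ⬝ᵥ v :=
  Finset.sum_nonneg fun i _ => mul_self_nonneg _

lemma oneLeDotSelf {n : ℕ} (v : Fin n → ℝ) (hv : ‖v‖ = 1) : 1 ≤ v ⬝ᵥ v := by
  have h1 : ∀ i, |v i| ≤ Real.sqrt (v ⬝ᵥ v) := by
    intro i
    rw [← Real.sqrt_sq_eq_abs]
    apply Real.sqrt_le_sqrt
    unfold dotProduct
    calc v i ^ 2 = v i * v i := pow_two (v i)
      _ ≤ ∑ j, v j * v j := Finset.single_le_sum (fun j _ => mul_self_nonneg (v j))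
            (Finset.mem_univ i)
  have h2 : ‖v‖ ≤ Real.sqrt (v ⬝ᵥ v) := by
    apply pi_norm_le_iff_of_nonneg (Real.sqrt_nonneg _) |>.2
    intro i
    simpa [Real.norm_eq_abs] using h1 i
  rw [hv] at h2
  have := Real.sqrt_nonneg (v ⬝ᵥ v)
  nlinarith [Real.sq_sqrt (dotSelfNonneg v)]

lemma absQuadLe {n : ℕ} (A : Matrix (Fin n) (Fin n) ℝ) (v : Fin n → ℝ) :
    |v ⬝ᵥ A *ᵥ v| ≤ ‖A‖ * (n * (v ⬝ᵥ v)) := by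
  have habs : |v ⬝ᵥ A *ᵥ v| ≤ ‖A‖ * (∑ i, |v i|) ^ 2 := by
    unfold dotProduct mulVec
    calc |∑ i, v i * ∑ j, A i j * v j| ≤ ∑ i, |v i * ∑ j, A i j * v j| :=
          Finset.abs_sum_le_sum_abs _ _
      _ ≤ ∑ i, |v i| * (‖A‖ * ∑ j, |v j|) := by
          refine Finset.sum_le_sum fun i _ => ?_
          rw [abs_mul]
          refine mul_le_mul_of_nonneg_left ?_ (abs_nonneg _)
          calc |∑ j, A i j * v j| ≤ ∑ j, |A i j * v j| := Finset.abs_sum_le_sum_abs _ _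
            _ ≤ ∑ j, ‖A‖ * |v j| := by
                refine Finset.sum_le_sum fun j _ => ?_
                rw [abs_mul]
                exact mul_le_mul_of_nonneg_right (A.norm_entry_le_entrywise_sup_norm)
                  (abs_nonneg _)
            _ = ‖A‖ * ∑ j, |v j| := by rw [Finset.mul_sum]
      _ = ‖A‖ * (∑ i, |v i|) ^ 2 := by
          rw [← Finset.sum_mul]
          ring
  refine habs.trans ?_
  refine mul_le_mul_of_nonneg_left ?_ (norm_nonneg _)
  have := sq_sum_le_card_mul_sum_sq (s := Finset.univ) (f := fun i => |v i|)
  simp only [Finset.card_univ, Fintype.card_fin, sq_abs] at this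
  refine this.trans ?_
  unfold dotProduct
  apply mul_le_mul_of_nonneg_left _ (Nat.cast_nonneg n)
  apply le_of_eq
  exact Finset.sum_congr rfl fun i _ => (pow_two (v i))

lemma psdOfUnit {n : ℕ} {A : Matrix (Fin n) (Fin n) ℝ} (hA : Aᵀ = A)
    (h : ∀ v : Fin n → ℝ, ‖v‖ = 1 → 0 ≤ v ⬝ᵥ A *ᵥ v) : A.PosSemidef := by
  refine PosSemidef.of_dotProduct_mulVec_nonneg ?_ ?_
  · rw [Matrix.IsHermitian, Matrix.conjTranspose_eq_transpose_of_trivial, hA]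
  · intro x
    rcases eq_or_ne x 0 with rfl | hx
    · simp
    · set u : Fin n → ℝ := ‖x‖⁻¹ • x with hu
      have hnx : (0:ℝ) < ‖x‖ := norm_pos_iff.2 hx
      have hun : ‖u‖ = 1 := by
        rw [hu, norm_smul, norm_inv, norm_norm, inv_mul_cancel₀ hnx.ne']
      have key := h u hun
      have hexp : u ⬝ᵥ A *ᵥ u = ‖x‖⁻¹ * ‖x‖⁻¹ * (x ⬝ᵥ A *ᵥ x) := by
        rw [hu, smul_dotProduct, Matrix.mulVec_smul, dotProduct_smul]
        simp [smul_eq_mul]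
        ring
      rw [hexp] at key
      have hx2 : (0:ℝ) < ‖x‖⁻¹ * ‖x‖⁻¹ := by positivity
      have : 0 ≤ x ⬝ᵥ A *ᵥ x := by
        by_contra hq
        push_neg at hq
        nlinarith
      simpa using this

lemma symmPres {n : ℕ}
    (M : ℝ → Matrix (Fin n) (Fin n) ℝ) (hMcont : Continuous M)
    (hMsymm : ∀ t, (M t)ᵀ = M t)
    (X : ℝ → Matrix (Fin n) (Fin n) ℝ)
    (hX : ∀ t, HasDerivAt X (-(M t) * X t - X t * M t) t)
    (hX0 : (X 0)ᵀ = X 0) {b : ℝ} (hb : 0 ≤ b) :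
    ∀ t ∈ Icc 0 b, (X t)ᵀ = X t := by
  obtain ⟨K, hK⟩ : ∃ K, ∀ t ∈ Icc (0:ℝ) b, ‖M t‖ ≤ K :=
    (isCompact_Icc.exists_bound_of_continuousOn hMcont.continuousOn)
  set K0 : ℝ := max K 0 with hK0def
  have hK0 : ∀ t ∈ Icc (0:ℝ) b, ‖M t‖ ≤ K0 := fun t ht => (hK t ht).trans (le_max_left _ _)
  have hK0nn : (0:ℝ) ≤ K0 := le_max_right _ _
  set c : ℝ → ℝ := fun t => max 0 (min t b) with hcdef
  have hcmem : ∀ t, c t ∈ Icc (0:ℝ) b := fun t =>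
    ⟨le_max_left _ _, max_le hb (min_le_right _ _)⟩
  have hceq : ∀ t ∈ Ico (0:ℝ) b, c t = t := fun t ht => by
    simp only [hcdef]
    rw [min_eq_left ht.2.le, max_eq_right ht.1]
  set N : ℝ → Matrix (Fin n) (Fin n) ℝ := fun t => M (c t) with hNdef
  set v : ℝ → Matrix (Fin n) (Fin n) ℝ → Matrix (Fin n) (Fin n) ℝ :=
    fun t A => -(N t) * A - A * (N t) with hvdef
  have hNle : ∀ t, ‖N t‖ ≤ K0 := fun t => hK0 _ (hcmem t)
  have hlip : ∀ t, LipschitzWith (Real.toNNReal (2 * n * K0)) (v t) := by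
    intro t
    apply LipschitzWith.of_dist_le_mul
    intro A B
    rw [dist_eq_norm, dist_eq_norm]
    have hdiff : v t A - v t B = -(N t * (A - B)) - (A - B) * N t := by
      simp only [hvdef]
      noncomm_ring
    rw [hdiff]
    have h1 : ‖-(N t * (A - B)) - (A - B) * N t‖ ≤ ‖N t * (A - B)‖ + ‖(A - B) * N t‖ := by
      calc ‖-(N t * (A - B)) - (A - B) * N t‖ ≤ ‖-(N t * (A - B))‖ + ‖(A - B) * N t‖ :=
            norm_sub_le _ _
        _ = ‖N t * (A - B)‖ + ‖(A - B) * N t‖ := by rw [norm_neg]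
    refine h1.trans ?_
    have h2 := normMulLe (N t) (A - B)
    have h3 := normMulLe (A - B) (N t)
    have hN := hNle t
    have hAB : (0:ℝ) ≤ ‖A - B‖ := norm_nonneg _
    have : (Real.toNNReal (2 * n * K0) : ℝ) = 2 * n * K0 := by
      rw [Real.coe_toNNReal]; positivity
    rw [this]
    have h4 : (n:ℝ) * ‖N t‖ ≤ n * K0 := mul_le_mul_of_nonneg_left hN (Nat.cast_nonneg n)
    nlinarith [mul_le_mul_of_nonneg_right h4 hAB]
  have hXc : Continuous X := continuous_iff_continuousAt.2 fun t =>
    (hX t).differentiableAt.continuousAt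
  have hXTc : Continuous (fun t => (X t)ᵀ) := trL.continuous.comp hXc
  have key : EqOn (fun t => (X t)ᵀ) X (Icc 0 b) := by
    apply ODE_solution_unique (v := v) hlip hXTc.continuousOn ?_ hXc.continuousOn ?_ hX0
    · intro t ht
      have hD : HasDerivAt (fun s => (X s)ᵀ) ((-(M t) * X t - X t * M t)ᵀ) t := by
        exact (trL.hasFDerivAt.comp_hasDerivAt t (hX t))
      have : (-(M t) * X t - X t * M t)ᵀ = v t ((X t)ᵀ) := by
        simp only [hvdef, hNdef, hceq t ht]
        rw [Matrix.transpose_sub, Matrix.transpose_mul, Matrix.transpose_mul,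
          Matrix.transpose_neg, hMsymm]
        noncomm_ring
      rw [this] at hD
      exact hD.hasDerivWithinAt
    · intro t ht
      have : v t (X t) = -(M t) * X t - X t * M t := by
        simp only [hvdef, hNdef, hceq t ht]
      rw [this]
      exact (hX t).hasDerivWithinAt
  exact fun t ht => key ht

lemma posPres {n : ℕ}
    (M : ℝ → Matrix (Fin n) (Fin n) ℝ) (hMcont : Continuous M)
    (hMsymm : ∀ t, (M t)ᵀ = M t)
    (X : ℝ → Matrix (Fin n) (Fin n) ℝ)
    (hX : ∀ t, HasDerivAt X (-(M t) * X t - X t * M t) t)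
    (hX0 : (X 0).PosSemidef) {b : ℝ} (hb : 0 ≤ b) :
    (X b).PosSemidef := by
  have hXc : Continuous X := continuous_iff_continuousAt.2 fun t =>
    (hX t).differentiableAt.continuousAt
  have hX0T : (X 0)ᵀ = X 0 := by
    rw [← Matrix.conjTranspose_eq_transpose_of_trivial]
    exact hX0.1
  have hsymm := symmPres M hMcont hMsymm X hX hX0T hb
  obtain ⟨K, hK⟩ : ∃ K, ∀ t ∈ Icc (0:ℝ) b, ‖M t‖ ≤ K :=
    isCompact_Icc.exists_bound_of_continuousOn hMcont.continuousOn
  set K0 : ℝ := max K 0 with hK0def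
  have hK0 : ∀ t ∈ Icc (0:ℝ) b, ‖M t‖ ≤ K0 := fun t ht => (hK t ht).trans (le_max_left _ _)
  have hK0nn : (0:ℝ) ≤ K0 := le_max_right _ _
  set C : ℝ := n * K0 + 1 with hCdef
  have hCpos : 0 < C := by positivity
  -- expansion of the quadratic form of the perturbed matrix
  have hexpand : ∀ (s : ℝ) (t : ℝ) (v : Fin n → ℝ),
      v ⬝ᵥ (X t + s • (1 : Matrix (Fin n) (Fin n) ℝ)) *ᵥ v
        = v ⬝ᵥ X t *ᵥ v + s * (v ⬝ᵥ v) := by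
    intro s t v
    rw [Matrix.add_mulVec, dotProduct_add, Matrix.smul_mulVec, Matrix.one_mulVec,
      dotProduct_smul, smul_eq_mul]
  -- THE MAIN CLAIM
  have claim : ∀ ε : ℝ, 0 < ε → ∀ t ∈ Icc (0:ℝ) b, ∀ v : Fin n → ℝ, ‖v‖ = 1 →
      0 < v ⬝ᵥ (X t + (ε * Real.exp (2*C*t)) • (1 : Matrix (Fin n) (Fin n) ℝ)) *ᵥ v := by
    intro ε hε
    set Y : ℝ → Matrix (Fin n) (Fin n) ℝ :=
      fun t => X t + (ε * Real.exp (2*C*t)) • (1 : Matrix (Fin n) (Fin n) ℝ) with hYdef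
    have hYc : Continuous Y := by
      apply hXc.add
      exact (continuous_const.mul ((continuous_const.mul continuous_id).rexp)).smul
        continuous_const
    by_contra hcon
    push_neg at hcon
    obtain ⟨t1, ht1, v1, hv1, hv1le⟩ := hcon
    -- the "bad set"
    haveI : CompactSpace (Metric.sphere (0 : Fin n → ℝ) 1) :=
      isCompact_iff_compactSpace.mp (isCompact_sphere 0 1)
    set A : Set (ℝ × Metric.sphere (0 : Fin n → ℝ) 1) :=
      {p | (p.2 : Fin n → ℝ) ⬝ᵥ Y p.1 *ᵥ (p.2 : Fin n → ℝ) ≤ 0} with hAdef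
    have hQcont : Continuous fun p : ℝ × Metric.sphere (0 : Fin n → ℝ) 1 =>
        (p.2 : Fin n → ℝ) ⬝ᵥ Y p.1 *ᵥ (p.2 : Fin n → ℝ) := by
      have hform : ∀ (t : ℝ) (v : Fin n → ℝ),
          v ⬝ᵥ Y t *ᵥ v = ∑ i, ∑ j, v i * (Y t i j * v j) := by
        intro t v
        simp [dotProduct, Matrix.mulVec, Finset.mul_sum]
      simp only [hform]
      have hcoord : ∀ i : Fin n, Continuous fun p : ℝ × Metric.sphere (0 : Fin n → ℝ) 1 =>
          (p.2 : Fin n → ℝ) i := fun i =>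
        (continuous_apply i).comp (continuous_subtype_val.comp continuous_snd)
      have hent : ∀ i j : Fin n, Continuous fun p : ℝ × Metric.sphere (0 : Fin n → ℝ) 1 =>
          Y p.1 i j := fun i j =>
        (continuous_apply j).comp ((continuous_apply i).comp (hYc.comp continuous_fst))
      exact continuous_finset_sum _ fun i _ =>
        continuous_finset_sum _ fun j _ => (hcoord i).mul ((hent i j).mul (hcoord j))
    have hAclosed : IsClosed A := isClosed_le hQcont continuous_const
    set B : Set ℝ := Icc 0 b ∩ (Prod.fst '' A) with hBdef
    have hBmem : ∀ t : ℝ, t ∈ B ↔ (t ∈ Icc (0:ℝ) b ∧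
        ∃ v : Fin n → ℝ, ‖v‖ = 1 ∧ v ⬝ᵥ Y t *ᵥ v ≤ 0) := by
      intro t
      constructor
      · rintro ⟨ht, ⟨p, hpA, hp1⟩⟩
        refine ⟨ht, (p.2 : Fin n → ℝ), mem_sphere_zero_iff_norm.mp p.2.2, ?_⟩
        rw [← hp1]; exact hpA
      · rintro ⟨ht, v, hv, hvle⟩
        exact ⟨ht, ⟨(t, ⟨v, mem_sphere_zero_iff_norm.mpr hv⟩), hvle, rfl⟩⟩
    have hBclosed : IsClosed B :=
      isClosed_Icc.inter (isClosedMap_fst_of_compactSpace _ hAclosed)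
    have hBne : B.Nonempty := ⟨t1, (hBmem t1).2 ⟨ht1, v1, hv1, hv1le⟩⟩
    have hBbdd : BddBelow B := ⟨0, fun x hx => hx.1.1⟩
    set t₀ : ℝ := sInf B with ht₀def
    have ht₀B : t₀ ∈ B := hBclosed.csInf_mem hBne hBbdd
    obtain ⟨ht₀Icc, v, hv, hvle⟩ := (hBmem t₀).1 ht₀B
    -- t₀ is positive
    have h0B : (0:ℝ) ∉ B := by
      rw [hBmem]
      rintro ⟨-, w, hw, hwle⟩
      have h1 : (0:ℝ) ≤ w ⬝ᵥ X 0 *ᵥ w := by simpa using hX0.dotProduct_mulVec_nonneg w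
      have h2 := oneLeDotSelf w hw
      have h3 : w ⬝ᵥ Y 0 *ᵥ w = w ⬝ᵥ X 0 *ᵥ w + (ε * Real.exp (2*C*0)) * (w ⬝ᵥ w) :=
        hexpand _ _ _
      rw [h3] at hwle
      simp only [mul_zero, Real.exp_zero, mul_one] at hwle
      nlinarith
    have ht₀pos : 0 < t₀ := lt_of_le_of_ne ht₀Icc.1 (fun h => h0B (h ▸ ht₀B))
    -- before t₀ the form is positive
    have hbefore : ∀ t ∈ Icc (0:ℝ) b, t < t₀ → ∀ w : Fin n → ℝ, ‖w‖ = 1 →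
        0 < w ⬝ᵥ Y t *ᵥ w := by
      intro t ht htlt w hw
      by_contra hle
      push_neg at hle
      have : t ∈ B := (hBmem t).2 ⟨ht, w, hw, hle⟩
      exact absurd (csInf_le hBbdd this) (not_le.mpr htlt)
    -- Y t₀ is PSD
    have hYsymm : (Y t₀)ᵀ = Y t₀ := by
      rw [hYdef]
      simp only [Matrix.transpose_add, Matrix.transpose_smul, Matrix.transpose_one]
      rw [hsymm t₀ ht₀Icc]
    have hYpsd : (Y t₀).PosSemidef := by
      apply psdOfUnit hYsymm
      intro w hw
      have hcont : ContinuousAt (fun t => w ⬝ᵥ Y t *ᵥ w) t₀ := by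
        have : Continuous fun t => w ⬝ᵥ Y t *ᵥ w := by
          have hform : ∀ (t : ℝ), w ⬝ᵥ Y t *ᵥ w = ∑ i, ∑ j, w i * (Y t i j * w j) := by
            intro t
            simp [dotProduct, Matrix.mulVec, Finset.mul_sum]
          simp only [hform]
          exact continuous_finset_sum _ fun i _ => continuous_finset_sum _ fun j _ =>
            continuous_const.mul ((((continuous_apply j).comp ((continuous_apply i).comp
              hYc))).mul continuous_const)
        exact this.continuousAt
      have htend : Tendsto (fun t => w ⬝ᵥ Y t *ᵥ w) (𝓝[<] t₀) (𝓝 (w ⬝ᵥ Y t₀ *ᵥ w)) :=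
        (hcont.tendsto).mono_left nhdsWithin_le_nhds
      refine ge_of_tendsto htend ?_
      filter_upwards [Ioo_mem_nhdsLT_of_mem (⟨ht₀pos, le_refl t₀⟩ : t₀ ∈ Ioc 0 t₀)] with t ht
      exact (hbefore t ⟨ht.1.le, ht.2.le.trans ht₀Icc.2⟩ ht.2 w hw).le
    -- the form vanishes at t₀ with kernel vector v
    have hzero : v ⬝ᵥ Y t₀ *ᵥ v = 0 := le_antisymm hvle (by simpa using hYpsd.dotProduct_mulVec_nonneg v)
    have hker : Y t₀ *ᵥ v = 0 := by
      have := (hYpsd.dotProduct_mulVec_zero_iff v).1 (by simpa using hzero)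
      exact this
    set s : ℝ := ε * Real.exp (2*C*t₀) with hsdef
    have hspos : 0 < s := by positivity
    have hXv : X t₀ *ᵥ v = (-s) • v := by
      have h1 : Y t₀ *ᵥ v = X t₀ *ᵥ v + s • v := by
        rw [hYdef]
        rw [Matrix.add_mulVec, Matrix.smul_mulVec, Matrix.one_mulVec]
      rw [h1] at hker
      have := eq_neg_of_add_eq_zero_left hker
      rw [this, neg_smul]
    -- the derivative of f at t₀
    set f : ℝ → ℝ := fun t => v ⬝ᵥ Y t *ᵥ v with hfdef
    set D : ℝ := v ⬝ᵥ (-(M t₀) * X t₀ - X t₀ * M t₀) *ᵥ v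
      + (v ⬝ᵥ v) * (ε * (Real.exp (2*C*t₀) * (2*C))) with hDdef
    have hfeq : f = fun t => qfL v (X t) + (v ⬝ᵥ v) * (ε * Real.exp (2*C*t)) := by
      funext t
      rw [hfdef]
      simp only [hYdef]
      rw [hexpand, qfL_apply]
      ring
    have hder : HasDerivAt f D t₀ := by
      rw [hfeq]
      have h1 : HasDerivAt (fun t => qfL v (X t))
          (qfL v (-(M t₀) * X t₀ - X t₀ * M t₀)) t₀ :=
        (qfL v).hasFDerivAt.comp_hasDerivAt _ (hX t₀)
      have h2 : HasDerivAt (fun t => 2*C*t) (2*C) t₀ := by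
        simpa using (hasDerivAt_id t₀).const_mul (2*C)
      have h3 : HasDerivAt (fun t => ε * Real.exp (2*C*t))
          (ε * (Real.exp (2*C*t₀) * (2*C))) t₀ := (h2.exp).const_mul ε
      have h4 := h1.add (h3.const_mul (v ⬝ᵥ v))
      exact h4
    -- D is positive
    have hDval : D = 2 * s * (v ⬝ᵥ M t₀ *ᵥ v) + (v ⬝ᵥ v) * (s * (2*C)) := by
      rw [hDdef]
      congr 1
      · have e1 : (-(M t₀) * X t₀ - X t₀ * M t₀) *ᵥ v
            = -(M t₀ *ᵥ (X t₀ *ᵥ v)) - X t₀ *ᵥ (M t₀ *ᵥ v) := by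
          rw [Matrix.sub_mulVec, Matrix.neg_mul, Matrix.neg_mulVec,
            Matrix.mulVec_mulVec, Matrix.mulVec_mulVec]
        rw [e1, dotProduct_sub, dotProduct_neg]
        rw [hXv, Matrix.mulVec_smul, dotProduct_smul]
        have e2 : v ⬝ᵥ X t₀ *ᵥ (M t₀ *ᵥ v) = (X t₀ *ᵥ v) ⬝ᵥ (M t₀ *ᵥ v) := by
          rw [dotProduct_mulVec, ← Matrix.mulVec_transpose, hsymm t₀ ht₀Icc]
        rw [e2, hXv, smul_dotProduct]
        simp only [smul_eq_mul]
        ring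
      · rw [hsdef]; ring
    have hDpos : 0 < D := by
      rw [hDval]
      have hb1 := absQuadLe (M t₀) v
      have hb2 := hK0 t₀ ht₀Icc
      have hb3 := oneLeDotSelf v hv
      have hb4 : |v ⬝ᵥ M t₀ *ᵥ v| ≤ K0 * (n * (v ⬝ᵥ v)) := by
        refine hb1.trans ?_
        apply mul_le_mul_of_nonneg_right hb2
        positivity
      have hb5 : -(K0 * (n * (v ⬝ᵥ v))) ≤ v ⬝ᵥ M t₀ *ᵥ v := neg_le_of_abs_le hb4
      have hvv : (0:ℝ) < v ⬝ᵥ v := lt_of_lt_of_le one_pos hb3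
      rw [hCdef]
      nlinarith [hspos, hvv]
    -- contradiction via left slopes
    have hf0 : f t₀ = 0 := hzero
    have hslope : Tendsto (slope f t₀) (𝓝[<] t₀) (𝓝 D) :=
      (hasDerivAt_iff_tendsto_slope.mp hder).mono_left
        (nhdsWithin_mono _ fun x hx => ne_of_lt hx)
    have hev : ∀ᶠ t in 𝓝[<] t₀, slope f t₀ t ≤ 0 := by
      filter_upwards [Ioo_mem_nhdsLT_of_mem (⟨ht₀pos, le_refl t₀⟩ : t₀ ∈ Ioc 0 t₀)] with t ht
      have hpos : 0 < f t :=
        hbefore t ⟨ht.1.le, ht.2.le.trans ht₀Icc.2⟩ ht.2 v hv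
      rw [slope_def_field, hf0, sub_zero]
      exact (div_neg_of_pos_of_neg hpos (by linarith [ht.2])).le
    have : D ≤ 0 := le_of_tendsto hslope hev
    linarith
  -- conclude
  apply psdOfUnit (hsymm b ⟨hb, le_refl b⟩)
  intro v hv
  by_contra hneg
  push_neg at hneg
  set q : ℝ := v ⬝ᵥ X b *ᵥ v with hq
  have hvv := oneLeDotSelf v hv
  have hvv0 : (0:ℝ) < v ⬝ᵥ v := lt_of_lt_of_le one_pos hvv
  set e : ℝ := Real.exp (2*C*b) with he
  have hepos : 0 < e := Real.exp_pos _
  set ε : ℝ := (-q) / (e * (v ⬝ᵥ v) * 2) with hε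
  have hεpos : 0 < ε := by
    apply div_pos (by linarith) (by positivity)
  have := claim ε hεpos b ⟨hb, le_refl b⟩ v hv
  rw [hexpand] at this
  have hcomp : ε * e * (v ⬝ᵥ v) = -q / 2 := by
    rw [hε]
    field_simp
  rw [← hq, ← he] at this
  nlinarith

/-- Positive semidefiniteness is preserved along the factorized
gradient-flow-type dynamics `Ẋ = -M X - X M`. -/
theorem stmt19 {n : ℕ}
    (M : ℝ → Matrix (Fin n) (Fin n) ℝ) (hMcont : Continuous M)
    (hMsymm : ∀ t, (M t)ᵀ = M t)
    (X : ℝ → Matrix (Fin n) (Fin n) ℝ)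
    (hX : ∀ t, HasDerivAt X (-(M t) * X t - X t * M t) t)
    (hX0 : (X 0).PosSemidef) :
    ∀ t, 0 ≤ t → (X t).PosSemidef := by
  intro t ht
  exact posPres M hMcont hMsymm X hX hX0 ht
end
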